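/- (Theorem 2) On the VB-mesh, the condition number κ(A_N) := ‖A_N⁻¹‖ ‖A_N‖ of the upwind matrix satisfies κ(A_N) ≤ C N²/ε, where C depends only on a, q, β, max|b| and max|c|, but not on ε or N. -/

import Mathlib

/-- `ψ(t) = aεt/(q−t)`, the Bakhvalov mesh-generating function on the fine part. -/
noncomputable def psi (a ε q t : ℝ) : ℝ := a * ε * t / (q - t)

/-- `ψ′(t) = aεq/(q−t)²`. -/
noncomputable def psi' (a ε q t : ℝ) : ℝ := a * ε * q / (q - t) ^ 2

/-- The transition parameter `α = (q − √(aεq(1−q+aε)))/(1+aε)` of the VB-mesh. -/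
noncomputable def alph (a ε q : ℝ) : ℝ :=
  (q - Real.sqrt (a * ε * q * (1 - q + a * ε))) / (1 + a * ε)

/-- The mesh-generating function `λ`: `ψ` on `[0,α]`, its tangent line on `[α,1]`. -/
noncomputable def lam (a ε q t : ℝ) : ℝ :=
  if t ≤ alph a ε q then psi a ε q t
  else psi a ε q (alph a ε q) + psi' a ε q (alph a ε q) * (t - alph a ε q)

/-- VB-mesh points `x_i = λ(i/N)`. -/
noncomputable def meshx (a ε q : ℝ) (N i : ℕ) : ℝ := lam a ε q ((i : ℝ) / (N : ℝ))

/-- Mesh steps `h_i = x_i − x_{i−1}`. -/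
noncomputable def meshh (a ε q : ℝ) (N i : ℕ) : ℝ :=
  meshx a ε q N i - meshx a ε q N (i - 1)

/-- Averaged mesh steps `h̄_i = (h_i + h_{i+1})/2`. -/
noncomputable def meshhb (a ε q : ℝ) (N i : ℕ) : ℝ :=
  (meshh a ε q N i + meshh a ε q N (i + 1)) / 2

/-- The coarse (uniform) step `H = ψ′(α)/N` of the VB-mesh. -/
noncomputable def bigH (a ε q : ℝ) (N : ℕ) : ℝ := psi' a ε q (alph a ε q) / N
/-- Maximum absolute row sum norm of a matrix. -/
noncomputable def matNorm {n : ℕ} (A : Matrix (Fin n) (Fin n) ℝ) : ℝ :=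
  ⨆ i, ∑ j, |A i j|

/-- Maximum norm of a vector. -/
noncomputable def vecNorm {n : ℕ} (v : Fin n → ℝ) : ℝ := ⨆ i, |v i|

/-- The upwind finite-difference matrix `A_N` on the mesh `x` for
`-ε u'' - b u' + c u`, with Dirichlet rows `0` and `N`. -/
noncomputable def upwind (b c : ℝ → ℝ) (ε : ℝ) (N : ℕ) (x : ℕ → ℝ) :
    Matrix (Fin (N + 1)) (Fin (N + 1)) ℝ :=
  fun i j =>
    let h : ℕ → ℝ := fun k => x k - x (k - 1)
    let hb : ℕ → ℝ := fun k => (h k + h (k + 1)) / 2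
    if (i : ℕ) = 0 ∨ (i : ℕ) = N then (if j = i then 1 else 0)
    else if (j : ℕ) + 1 = (i : ℕ) then -ε / (h (i : ℕ) * hb (i : ℕ))
    else if (j : ℕ) = (i : ℕ) + 1 then
      -ε / (h ((i : ℕ) + 1) * hb (i : ℕ)) - b (x (i : ℕ)) / h ((i : ℕ) + 1)
    else if j = i then
      ε / (h (i : ℕ) * hb (i : ℕ)) +
        (ε / (h ((i : ℕ) + 1) * hb (i : ℕ)) + b (x (i : ℕ)) / h ((i : ℕ) + 1)) +
        c (x (i : ℕ))
    else 0

/-! The upwind matrix is an M-matrix: its off-diagonal entries are nonpositive, its row sums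
are nonnegative, and it maps the barrier `2 − x_i` to a vector bounded below by `min(1, β)`
(the convection term contributes `b(x_i) ≥ β`). The discrete maximum principle therefore gives
`‖A_N⁻¹‖ ≤ 2 / min(1, β)` on any mesh. On the other hand `λ` has slope at least `ψ′(0) = aε/q`,
so every VB-mesh step is at least `aε/(qN)`, and each row of `A_N` has absolute sum
`O(ε/h² + 1/h) = O(N²/ε)`. -/

open Matrix

namespace Matrix

variable {ι : Type*} [Fintype ι] {A : Matrix ι ι ℝ}

theorem nonneg_of_mulVec_pos (hoff : ∀ i j, i ≠ j → A i j ≤ 0) (hrow : ∀ i, 0 ≤ ∑ j, A i j)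
    {z : ι → ℝ} (hz : ∀ i, 0 < (A *ᵥ z) i) (i : ι) : 0 ≤ z i := by
  have : Nonempty ι := ⟨i⟩
  obtain ⟨k, hk⟩ := Finite.exists_min z
  refine le_trans ?_ (hk i)
  by_contra! hneg
  have hle : (A *ᵥ z) k ≤ (∑ j, A k j) * z k := by
    rw [Finset.sum_mul]
    refine Finset.sum_le_sum fun j _ => ?_
    rcases eq_or_ne k j with rfl | hkj
    · rfl
    · exact mul_le_mul_of_nonpos_left (hk j) (hoff k j hkj)
  nlinarith [hz k, hrow k]

theorem nonneg_of_mulVec_nonneg (hoff : ∀ i j, i ≠ j → A i j ≤ 0) (hrow : ∀ i, 0 ≤ ∑ j, A i j)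
    {v : ι → ℝ} (hv : ∀ i, 0 < (A *ᵥ v) i) {z : ι → ℝ} (hz : ∀ i, 0 ≤ (A *ᵥ z) i) (i : ι) :
    0 ≤ z i := by
  have perturbed : ∀ η > 0, 0 ≤ z i + η * v i := fun η hη =>
    nonneg_of_mulVec_pos hoff hrow (z := z + η • v)
      (fun j => by simpa [mulVec_add, mulVec_smul] using
        add_pos_of_nonneg_of_pos (hz j) (mul_pos hη (hv j))) i
  rcases (nonneg_of_mulVec_pos hoff hrow hv i).eq_or_lt with hvi | hvi
  · simpa [← hvi] using perturbed 1 one_pos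
  · refine neg_nonpos.mp (le_of_forall_pos_le_add fun δ hδ => ?_)
    have := perturbed (δ / v i) (by positivity)
    rw [div_mul_cancel₀ _ hvi.ne'] at this
    linarith

theorem abs_le_of_barrier (hoff : ∀ i j, i ≠ j → A i j ≤ 0) (hrow : ∀ i, 0 ≤ ∑ j, A i j)
    {v : ι → ℝ} {m V : ℝ} (hm : 0 < m) (hAv : ∀ i, m ≤ (A *ᵥ v) i) (hvV : ∀ i, v i ≤ V)
    {w : ι → ℝ} {s : ℝ} (hw : ∀ i, |(A *ᵥ w) i| ≤ s) (i : ι) : |w i| ≤ V / m * s := by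
  have hv : ∀ i, 0 < (A *ᵥ v) i := fun i => hm.trans_le (hAv i)
  have hs : 0 ≤ s := (abs_nonneg _).trans (hw i)
  have one_side : ∀ w : ι → ℝ, (∀ i, |(A *ᵥ w) i| ≤ s) → w i ≤ V / m * s := by
    intro w hw
    have hz : ∀ j, 0 ≤ (A *ᵥ ((s / m) • v - w)) j := by
      intro j
      have h1 : s ≤ s / m * (A *ᵥ v) j := by
        calc s = s / m * m := by field_simp
          _ ≤ s / m * (A *ᵥ v) j := by gcongr; exact hAv j
      have h2 := (le_abs_self _).trans (hw j)
      simp only [mulVec_sub, mulVec_smul, Pi.sub_apply, Pi.smul_apply, smul_eq_mul]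
      linarith
    have := nonneg_of_mulVec_nonneg hoff hrow hv hz i
    simp only [Pi.sub_apply, Pi.smul_apply, smul_eq_mul] at this
    calc w i ≤ s / m * v i := by linarith
      _ ≤ s / m * V := by gcongr; exact hvV i
      _ = V / m * s := by ring
  rw [abs_le]
  constructor
  · have := one_side (-w) (by simpa [mulVec_neg] using hw)
    simp only [Pi.neg_apply] at this
    linarith
  · exact one_side w hw

theorem sum_abs_row_eq [DecidableEq ι] {i : ι} (hoff : ∀ j, i ≠ j → A i j ≤ 0)
    (hdiag : 0 ≤ A i i) : ∑ j, |A i j| = 2 * A i i - ∑ j, A i j := by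
  have : ∑ j, (|A i j| + A i j) = 2 * A i i := by
    rw [Finset.sum_eq_single i (fun j _ hji => by simp [abs_of_nonpos (hoff j hji.symm)])
      (by simp), abs_of_nonneg hdiag, two_mul]
  rw [← this, Finset.sum_add_distrib]
  ring

end Matrix

theorem matNorm_nonneg {n : ℕ} [NeZero n] (A : Matrix (Fin n) (Fin n) ℝ) : 0 ≤ matNorm A :=
  (Finset.sum_nonneg fun j _ => abs_nonneg (A 0 j)).trans
    (le_ciSup (f := fun i => ∑ j, |A i j|) (Set.finite_range _).bddAbove 0)

theorem matNorm_le {n : ℕ} [NeZero n] {A : Matrix (Fin n) (Fin n) ℝ} {K : ℝ}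
    (hK : ∀ i, ∑ j, |A i j| ≤ K) : matNorm A ≤ K :=
  ciSup_le hK

theorem matNorm_inv_le_of_barrier {n : ℕ} [NeZero n] {A : Matrix (Fin n) (Fin n) ℝ}
    (hoff : ∀ i j, i ≠ j → A i j ≤ 0) (hrow : ∀ i, 0 ≤ ∑ j, A i j)
    {v : Fin n → ℝ} {m V : ℝ} (hm : 0 < m) (hAv : ∀ i, m ≤ (A *ᵥ v) i) (hvV : ∀ i, v i ≤ V) :
    matNorm A⁻¹ ≤ V / m := by
  have stable : ∀ {w : Fin n → ℝ} {s : ℝ}, (∀ i, |(A *ᵥ w) i| ≤ s) → ∀ i, |w i| ≤ V / m * s :=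
    Matrix.abs_le_of_barrier hoff hrow hm hAv hvV
  have hdet : IsUnit A.det := by
    refine isUnit_iff_ne_zero.mpr fun h0 => ?_
    obtain ⟨w, hw0, hAw⟩ := exists_mulVec_eq_zero_iff.mpr h0
    refine hw0 (funext fun i => abs_nonpos_iff.mp ?_)
    simpa using stable (s := 0) (by simp [hAw]) i
  refine matNorm_le fun i => ?_
  set u : Fin n → ℝ := fun j => SignType.sign (A⁻¹ i j)
  have hu : ∀ j, |u j| ≤ 1 := fun j => by
    simp only [u]
    cases SignType.sign (A⁻¹ i j) <;> simp
  have hAu : A *ᵥ (A⁻¹ *ᵥ u) = u := by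
    rw [mulVec_mulVec, mul_nonsing_inv A hdet, one_mulVec]
  calc ∑ j, |A⁻¹ i j| = (A⁻¹ *ᵥ u) i := by simp [u, mulVec, dotProduct, self_mul_sign]
    _ ≤ |(A⁻¹ *ᵥ u) i| := le_abs_self _
    _ ≤ V / m * 1 := stable (by rwa [hAu]) i
    _ = V / m := mul_one _

noncomputable def gridStep (x : ℕ → ℝ) (k : ℕ) : ℝ := x k - x (k - 1)

noncomputable def gridAvgStep (x : ℕ → ℝ) (k : ℕ) : ℝ := (gridStep x k + gridStep x (k + 1)) / 2

noncomputable def upwindLower (ε : ℝ) (x : ℕ → ℝ) (i : ℕ) : ℝ :=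
  ε / (gridStep x i * gridAvgStep x i)

noncomputable def upwindUpper (b : ℝ → ℝ) (ε : ℝ) (x : ℕ → ℝ) (i : ℕ) : ℝ :=
  ε / (gridStep x (i + 1) * gridAvgStep x i) + b (x i) / gridStep x (i + 1)

theorem Fin.sum_eq_of_tridiagonal {N : ℕ} (i : Fin (N + 1)) (hi : ¬((i : ℕ) = 0 ∨ (i : ℕ) = N))
    (f : Fin (N + 1) → ℝ)
    (hf : ∀ j : Fin (N + 1), (j : ℕ) + 1 ≠ i → (j : ℕ) ≠ i + 1 → j ≠ i → f j = 0) :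
    ∑ j, f j = f ⟨i - 1, by omega⟩ + f i + f ⟨i + 1, by omega⟩ := by
  have hsupp : ∑ j, f j = ∑ j ∈ {⟨i - 1, by omega⟩, i, ⟨i + 1, by omega⟩}, f j := by
    refine (Finset.sum_subset (Finset.subset_univ _) fun j _ hj => hf j ?_ ?_ ?_).symm <;>
      · simp only [Finset.mem_insert, Finset.mem_singleton, Fin.ext_iff] at hj
        omega
  rw [hsupp, Finset.sum_insert (by simp [Fin.ext_iff]; omega),
    Finset.sum_insert (by simp [Fin.ext_iff]), Finset.sum_singleton, add_assoc]

theorem gridAvgStep_pos {x : ℕ → ℝ} {N i : ℕ} (hh : ∀ k, 0 < k → k ≤ N → 0 < gridStep x k)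
    (hi : 0 < i) (hiN : i < N) : 0 < gridAvgStep x i := by
  have := hh i hi hiN.le
  have := hh (i + 1) i.succ_pos hiN
  unfold gridAvgStep
  positivity

namespace upwind

variable {b c : ℝ → ℝ} {ε : ℝ} {N : ℕ} {x : ℕ → ℝ}

theorem apply_of_boundary (i j : Fin (N + 1)) (hi : (i : ℕ) = 0 ∨ (i : ℕ) = N) :
    upwind b c ε N x i j = if j = i then 1 else 0 := by
  simp only [upwind, if_pos hi]

theorem apply_of_interior (i j : Fin (N + 1)) (hi : ¬((i : ℕ) = 0 ∨ (i : ℕ) = N)) :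
    upwind b c ε N x i j =
      if (j : ℕ) + 1 = i then -upwindLower ε x i
      else if (j : ℕ) = i + 1 then -upwindUpper b ε x i
      else if j = i then upwindLower ε x i + upwindUpper b ε x i + c (x i)
      else 0 := by
  simp only [upwind, if_neg hi, upwindLower, upwindUpper, gridAvgStep, gridStep]
  split_ifs <;> ring

theorem apply_sub (i : Fin (N + 1)) (hi : ¬((i : ℕ) = 0 ∨ (i : ℕ) = N)) :
    upwind b c ε N x i ⟨i - 1, by omega⟩ = -upwindLower ε x i := by
  rw [apply_of_interior _ _ hi, if_pos (by dsimp only; omega)]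

theorem apply_super (i : Fin (N + 1)) (hi : ¬((i : ℕ) = 0 ∨ (i : ℕ) = N)) :
    upwind b c ε N x i ⟨i + 1, by omega⟩ = -upwindUpper b ε x i := by
  rw [apply_of_interior _ _ hi, if_neg (by dsimp only; omega), if_pos rfl]

theorem apply_diag (i : Fin (N + 1)) (hi : ¬((i : ℕ) = 0 ∨ (i : ℕ) = N)) :
    upwind b c ε N x i i = upwindLower ε x i + upwindUpper b ε x i + c (x i) := by
  rw [apply_of_interior _ _ hi, if_neg (by omega), if_neg (by omega), if_pos rfl]

theorem mulVec_of_boundary (g : Fin (N + 1) → ℝ) (i : Fin (N + 1))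
    (hi : (i : ℕ) = 0 ∨ (i : ℕ) = N) : (upwind b c ε N x *ᵥ g) i = g i := by
  simp [Matrix.mulVec, dotProduct, apply_of_boundary _ _ hi]

theorem mulVec_of_interior (g : Fin (N + 1) → ℝ) (i : Fin (N + 1))
    (hi : ¬((i : ℕ) = 0 ∨ (i : ℕ) = N)) :
    (upwind b c ε N x *ᵥ g) i =
      upwindLower ε x i * (g i - g ⟨i - 1, by omega⟩)
        + upwindUpper b ε x i * (g i - g ⟨i + 1, by omega⟩) + c (x i) * g i := by
  rw [Matrix.mulVec, dotProduct, Fin.sum_eq_of_tridiagonal i hi _ fun j h1 h2 h3 => by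
    simp [apply_of_interior i j hi, h1, h2, h3]]
  rw [apply_sub i hi, apply_diag i hi, apply_super i hi]
  ring

theorem offdiag_nonpos (hε : 0 ≤ ε) (hh : ∀ k, 0 < k → k ≤ N → 0 < gridStep x k)
    (hb : ∀ k ≤ N, 0 ≤ b (x k)) (i j : Fin (N + 1)) (hij : i ≠ j) :
    upwind b c ε N x i j ≤ 0 := by
  by_cases hi : (i : ℕ) = 0 ∨ (i : ℕ) = N
  · simp [apply_of_boundary i j hi, hij.symm]
  have := hh i (by omega) (by omega)
  have := hh (i + 1) (by omega) (by omega)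
  have := gridAvgStep_pos hh (i := i) (by omega) (by omega)
  have := hb i (by omega)
  rw [apply_of_interior i j hi]
  split_ifs with _ _ hji
  · exact neg_nonpos.mpr (by unfold upwindLower; positivity)
  · exact neg_nonpos.mpr (by unfold upwindUpper; positivity)
  · exact absurd hji.symm hij
  · rfl

theorem sum_row_eq (i : Fin (N + 1)) :
    ∑ j, upwind b c ε N x i j = if (i : ℕ) = 0 ∨ (i : ℕ) = N then 1 else c (x i) := by
  have h : ∑ j, upwind b c ε N x i j = (upwind b c ε N x *ᵥ fun _ => 1) i := by
    simp [Matrix.mulVec, dotProduct]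
  split_ifs with hi
  · rw [h, mulVec_of_boundary _ i hi]
  · rw [h, mulVec_of_interior _ i hi]
    ring

theorem sum_row_nonneg (hc : ∀ k ≤ N, 0 ≤ c (x k)) (i : Fin (N + 1)) :
    0 ≤ ∑ j, upwind b c ε N x i j := by
  rw [sum_row_eq]
  split_ifs
  · exact zero_le_one
  · exact hc i (by omega)

theorem min_le_mulVec_barrier {β : ℝ} (hh : ∀ k, 0 < k → k ≤ N → 0 < gridStep x k)
    (hx : ∀ k ≤ N, x k ≤ 1) (hb : ∀ k ≤ N, β ≤ b (x k)) (hc : ∀ k ≤ N, 0 ≤ c (x k))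
    (i : Fin (N + 1)) : min 1 β ≤ (upwind b c ε N x *ᵥ fun j => 2 - x j) i := by
  have hxi := hx i (by omega)
  by_cases hi : (i : ℕ) = 0 ∨ (i : ℕ) = N
  · rw [mulVec_of_boundary _ i hi]
    linarith [min_le_left 1 β]
  have hstep := hh i (by omega) (by omega)
  have hstep' := hh (i + 1) (by omega) (by omega)
  have havg := gridAvgStep_pos hh (i := i) (by omega) (by omega)
  have hlower : upwindLower ε x i * (x (i - 1) - x i) = -(ε / gridAvgStep x i) := by
    unfold upwindLower gridStep at *
    field_simp
    ring
  have hupper : upwindUpper b ε x i * (x (i + 1) - x i) = ε / gridAvgStep x i + b (x i) := by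
    unfold upwindUpper gridStep at *
    simp only [Nat.add_sub_cancel] at *
    field_simp
  rw [mulVec_of_interior _ i hi]
  simp only [sub_sub_sub_cancel_left, hlower, hupper]
  nlinarith [min_le_right 1 β, hb i (by omega), hc i (by omega)]

theorem matNorm_inv_le {β : ℝ} (hβ : 0 < β) (hε : 0 ≤ ε)
    (hh : ∀ k, 0 < k → k ≤ N → 0 < gridStep x k)
    (hx : ∀ k ≤ N, x k ∈ Set.Icc (0 : ℝ) 1) (hb : ∀ k ≤ N, β ≤ b (x k))
    (hc : ∀ k ≤ N, 0 ≤ c (x k)) :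
    matNorm (upwind b c ε N x)⁻¹ ≤ 2 / min 1 β :=
  matNorm_inv_le_of_barrier
    (offdiag_nonpos hε hh fun k hk => hβ.le.trans (hb k hk)) (sum_row_nonneg hc)
    (lt_min one_pos hβ) (min_le_mulVec_barrier hh (fun k hk => (hx k hk).2) hb hc)
    (fun j => by linarith [(hx j (by omega)).1])

theorem matNorm_le {B C δ : ℝ} (hε : 0 ≤ ε) (hδ : 0 < δ)
    (hstep : ∀ k, 0 < k → k ≤ N → δ ≤ gridStep x k)
    (hb : ∀ k ≤ N, b (x k) ∈ Set.Icc 0 B) (hc : ∀ k ≤ N, c (x k) ∈ Set.Icc 0 C) :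
    matNorm (upwind b c ε N x) ≤ max 1 (4 * (ε / δ ^ 2) + 2 * (B / δ) + C) := by
  have hh : ∀ k, 0 < k → k ≤ N → 0 < gridStep x k := fun k hk hkN => hδ.trans_le (hstep k hk hkN)
  refine _root_.matNorm_le fun i => ?_
  have hoff := offdiag_nonpos hε hh (fun k hk => (hb k hk).1) (c := c) i
  by_cases hi : (i : ℕ) = 0 ∨ (i : ℕ) = N
  · rw [Matrix.sum_abs_row_eq hoff (by simp [apply_of_boundary i i hi]), sum_row_eq, if_pos hi,
      apply_of_boundary i i hi, if_pos rfl]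
    exact le_max_of_le_left (by norm_num)
  have hl : 0 ≤ upwindLower ε x i := by
    have := gridAvgStep_pos hh (i := i) (by omega) (by omega)
    have := hh i (by omega) (by omega)
    unfold upwindLower
    positivity
  have hu : 0 ≤ upwindUpper b ε x i := by
    have := gridAvgStep_pos hh (i := i) (by omega) (by omega)
    have := hh (i + 1) (by omega) (by omega)
    have := (hb i (by omega)).1
    unfold upwindUpper
    positivity
  have hci := hc i (by omega)
  rw [Matrix.sum_abs_row_eq hoff (by rw [apply_diag i hi]; linarith [hci.1]), sum_row_eq,
    if_neg hi, apply_diag i hi]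
  refine le_max_of_le_right ?_
  have hδi := hstep i (by omega) (by omega)
  have hδi' := hstep (i + 1) (by omega) (by omega)
  have havg : δ ≤ gridAvgStep x i := by unfold gridAvgStep; linarith
  have hlower : upwindLower ε x i ≤ ε / δ ^ 2 := by
    unfold upwindLower
    gcongr
    nlinarith
  have hupper : upwindUpper b ε x i ≤ ε / δ ^ 2 + B / δ := by
    unfold upwindUpper
    have hbi := hb i (by omega)
    gcongr
    · nlinarith
    · exact hbi.1.trans hbi.2
    · exact hbi.2
  linarith [hci.2]

end upwind

section VBMesh

variable {a ε q : ℝ}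

theorem alph_sqrt_lt (hae : 0 < a * ε) (haeq : a * ε < q) :
    √(a * ε * q * (1 - q + a * ε)) < q := by
  have hq : 0 < q := hae.trans haeq
  rw [Real.sqrt_lt' hq]
  have : a * ε * (1 - q + a * ε) < q := by nlinarith
  nlinarith

theorem alph_pos (hae : 0 < a * ε) (haeq : a * ε < q) : 0 < alph a ε q :=
  div_pos (sub_pos.mpr (alph_sqrt_lt hae haeq)) (by linarith)

theorem alph_lt (hae : 0 < a * ε) (haeq : a * ε < q) : alph a ε q < q := by
  have hq : 0 < q := hae.trans haeq
  rw [alph, div_lt_iff₀ (by linarith)]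
  nlinarith [Real.sqrt_nonneg (a * ε * q * (1 - q + a * ε))]

/-- The tangent to `ψ` at `α` passes through `(1, 1)`. -/
theorem sq_sub_alph (hae : 0 < a * ε) (haeq : a * ε < q) (hq1 : q < 1) :
    (q - alph a ε q) ^ 2 = a * ε * (q - alph a ε q ^ 2) := by
  have hq : 0 < q := hae.trans haeq
  have hs := Real.sq_sqrt (show 0 ≤ a * ε * q * (1 - q + a * ε) by
    have : 0 < 1 - q + a * ε := by linarith
    positivity)
  rw [alph]
  generalize √(a * ε * q * (1 - q + a * ε)) = s at hs
  field_simp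
  linear_combination (1 + a * ε) * hs

theorem lam_zero (hae : 0 < a * ε) (haeq : a * ε < q) : lam a ε q 0 = 0 := by
  simp [lam, (alph_pos hae haeq).le, psi]

theorem lam_one (hae : 0 < a * ε) (haeq : a * ε < q) (hq1 : q < 1) : lam a ε q 1 = 1 := by
  have hα := alph_lt hae haeq
  have hd : q - alph a ε q ≠ 0 := (sub_pos.mpr hα).ne'
  rw [lam, if_neg (by linarith), psi, psi']
  field_simp
  linear_combination (-1 : ℝ) * sq_sub_alph hae haeq hq1

theorem psi_sub_psi_ge (hae : 0 ≤ a * ε) {t₁ t₂ : ℝ} (h₀ : 0 ≤ t₁) (h₁₂ : t₁ ≤ t₂)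
    (h₂ : t₂ < q) : a * ε / q * (t₂ - t₁) ≤ psi a ε q t₂ - psi a ε q t₁ := by
  have hq : 0 < q := by linarith
  have hd₁ : 0 < q - t₁ := by linarith
  have hd₂ : 0 < q - t₂ := by linarith
  have hdiff : psi a ε q t₂ - psi a ε q t₁ = a * ε * q * (t₂ - t₁) / ((q - t₁) * (q - t₂)) := by
    rw [psi, psi]
    field_simp
    ring
  rw [hdiff, div_mul_eq_mul_div, div_le_div_iff₀ hq (by positivity)]
  have : 0 ≤ a * ε * (t₂ - t₁) := mul_nonneg hae (by linarith)
  nlinarith [mul_le_mul_of_nonneg_left (show (q - t₁) * (q - t₂) ≤ q * q by nlinarith) this]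

theorem div_le_psi' (hae : 0 ≤ a * ε) {t : ℝ} (h₀ : 0 ≤ t) (hq : t < q) :
    a * ε / q ≤ psi' a ε q t := by
  rw [psi', div_le_div_iff₀ (by linarith) (by nlinarith)]
  nlinarith [mul_le_mul_of_nonneg_left (show (q - t) ^ 2 ≤ q * q by nlinarith) hae]

theorem lam_sub_lam_ge (hae : 0 < a * ε) (haeq : a * ε < q) {t₁ t₂ : ℝ} (h₀ : 0 ≤ t₁)
    (h₁₂ : t₁ ≤ t₂) : a * ε / q * (t₂ - t₁) ≤ lam a ε q t₂ - lam a ε q t₁ := by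
  have hα₀ := alph_pos hae haeq
  have hαq := alph_lt hae haeq
  have hslope := div_le_psi' hae.le hα₀.le hαq
  unfold lam
  split_ifs with h₂ h₁ h₁
  · exact psi_sub_psi_ge hae.le h₀ h₁₂ (by linarith)
  · linarith
  · have := psi_sub_psi_ge hae.le h₀ h₁ hαq
    nlinarith
  · nlinarith

theorem meshx_mem_Icc (hae : 0 < a * ε) (haeq : a * ε < q) (hq1 : q < 1) {N k : ℕ} (hN : 0 < N)
    (hk : k ≤ N) : meshx a ε q N k ∈ Set.Icc (0 : ℝ) 1 := by
  have ht₀ : (0 : ℝ) ≤ k / N := by positivity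
  have ht₁ : (k : ℝ) / N ≤ 1 := div_le_one_of_le₀ (by exact_mod_cast hk) (by positivity)
  have hslope : 0 ≤ a * ε / q := div_nonneg hae.le (hae.trans haeq).le
  have h₀ := lam_sub_lam_ge hae haeq le_rfl ht₀
  have h₁ := lam_sub_lam_ge hae haeq ht₀ ht₁
  rw [lam_zero hae haeq] at h₀
  rw [lam_one hae haeq hq1] at h₁
  constructor <;> simp only [meshx] <;> nlinarith

theorem gridStep_meshx_ge (hae : 0 < a * ε) (haeq : a * ε < q) {N k : ℕ} (hk : 0 < k)
    (hkN : k ≤ N) : a * ε / (q * N) ≤ gridStep (meshx a ε q N) k := by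
  have hN : (0 : ℝ) < N := by exact_mod_cast hk.trans_le hkN
  have hcast : ((k - 1 : ℕ) : ℝ) = k - 1 := by rw [Nat.cast_sub hk, Nat.cast_one]
  have := lam_sub_lam_ge hae haeq (t₁ := ((k - 1 : ℕ) : ℝ) / N) (t₂ := k / N) (by positivity)
    (by gcongr; omega)
  calc a * ε / (q * N) = a * ε / q * (k / N - ((k - 1 : ℕ) : ℝ) / N) := by
        rw [hcast]; field_simp; ring
    _ ≤ gridStep (meshx a ε q N) k := this

end VBMesh

theorem vb_upwind_norm_bound_le {a ε q B C : ℝ} {N : ℕ} (ha : 0 < a) (hε : 0 < ε)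
    (haeq : a * ε < q) (hN : 0 < N) (hB : 0 ≤ B) (hC : 0 ≤ C) :
    max 1 (4 * (ε / (a * ε / (q * N)) ^ 2) + 2 * (B / (a * ε / (q * N))) + C) ≤
      (4 * (q / a) + 2 * B + C + 1) * (q / a) * N ^ 2 / ε := by
  have hN1 : (1 : ℝ) ≤ N := by exact_mod_cast hN
  have hq : 0 < q := (mul_pos ha hε).trans haeq
  set M : ℝ := q / a * N ^ 2 / ε with hMdef
  have hM : 1 ≤ M := by
    rw [hMdef, le_div_iff₀ hε, div_mul_eq_mul_div, le_div_iff₀ ha]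
    nlinarith [one_le_pow₀ (n := 2) hN1]
  have h₁ : ε / (a * ε / (q * N)) ^ 2 = q / a * M := by
    rw [hMdef]
    field_simp
  have h₂ : B / (a * ε / (q * N)) ≤ B * M := by
    rw [show B / (a * ε / (q * N)) = B * (q / a * N / ε) by field_simp, hMdef]
    gcongr
    nlinarith
  have hRHS : (4 * (q / a) + 2 * B + C + 1) * (q / a) * N ^ 2 / ε =
      (4 * (q / a) + 2 * B + C + 1) * M := by
    ring
  have hqa := div_pos hq ha
  rw [hRHS, h₁]
  exact max_le (by nlinarith) (by nlinarith)

/-- Theorem 2: on the VB-mesh, the condition number of the upwind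
matrix satisfies `κ(A_N) = ‖A_N⁻¹‖ ‖A_N‖ ≤ C N²/ε` with `C` independent of `ε`
and `N`. -/
theorem stmt_10 (q a β : ℝ) (hq0 : 0 < q) (hq1 : q < 1) (ha : 0 < a) (hβ : 0 < β)
    (b c : ℝ → ℝ) (hb : ContinuousOn b (Set.Icc 0 1)) (hc : ContinuousOn c (Set.Icc 0 1))
    (hbl : ∀ t ∈ Set.Icc (0 : ℝ) 1, β ≤ b t)
    (hcl : ∀ t ∈ Set.Icc (0 : ℝ) 1, 0 ≤ c t) :
    ∃ C : ℝ, 0 < C ∧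
      ∀ (ε : ℝ) (N : ℕ), 0 < ε → a * ε < q → 2 ≤ N →
        matNorm (upwind b c ε N (meshx a ε q N))⁻¹ *
            matNorm (upwind b c ε N (meshx a ε q N)) ≤ C * (N : ℝ) ^ 2 / ε := by
  obtain ⟨B, hB⟩ := isCompact_Icc.exists_bound_of_continuousOn hb
  obtain ⟨Cc, hCc⟩ := isCompact_Icc.exists_bound_of_continuousOn hc
  have h01 : (0 : ℝ) ∈ Set.Icc (0 : ℝ) 1 := ⟨le_rfl, zero_le_one⟩
  have hB0 : 0 ≤ B := (norm_nonneg _).trans (hB 0 h01)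
  have hCc0 : 0 ≤ Cc := (norm_nonneg _).trans (hCc 0 h01)
  refine ⟨2 / min 1 β * ((4 * (q / a) + 2 * B + Cc + 1) * (q / a)),
    mul_pos (div_pos two_pos (lt_min one_pos hβ)) (by positivity), ?_⟩
  intro ε N hε haeq hN
  have hae := mul_pos ha hε
  have hx : ∀ k ≤ N, meshx a ε q N k ∈ Set.Icc (0 : ℝ) 1 :=
    fun k => meshx_mem_Icc hae haeq hq1 (by omega)
  have hstep : ∀ k, 0 < k → k ≤ N → a * ε / (q * N) ≤ gridStep (meshx a ε q N) k :=
    fun k => gridStep_meshx_ge hae haeq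
  have hinv := upwind.matNorm_inv_le hβ hε.le
    (fun k hk hkN => (by positivity : 0 < a * ε / (q * N)).trans_le (hstep k hk hkN)) hx
    (fun k hk => hbl _ (hx k hk)) (fun k hk => hcl _ (hx k hk))
  have hnorm := upwind.matNorm_le (B := B) (C := Cc) hε.le (by positivity) hstep
    (fun k hk => ⟨hβ.le.trans (hbl _ (hx k hk)), (le_abs_self _).trans (hB _ (hx k hk))⟩)
    (fun k hk => ⟨hcl _ (hx k hk), (le_abs_self _).trans (hCc _ (hx k hk))⟩)
  calc _ ≤ 2 / min 1 β * ((4 * (q / a) + 2 * B + Cc + 1) * (q / a) * N ^ 2 / ε) :=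
        mul_le_mul hinv (hnorm.trans (vb_upwind_norm_bound_le ha hε haeq (by omega) hB0 hCc0))
          (matNorm_nonneg _) (div_nonneg zero_le_two (le_min zero_le_one hβ.le))
    _ = _ := by ring
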